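/- Let N=(V,E,s,t) be an acyclic unit-capacity point-to-point network and 1 ≤ k ≤ C_N(s,t). For an edge e ∈ E, there exists a k-CF of N containing e if and only if there exists a directed s-t path p containing e such that C_{N\p}(s,t) ≥ C_N(s,t) − k, where N\p denotes N with all edges of p deleted. -/

import Mathlib

/-- A point-to-point network: a finite directed multigraph with edge set
`edges`, endpoint maps `tail`/`head`, source `s` and sink `t`; every edge has
unit capacity. -/
structure Network (V : Type) (ε : Type) where
  edges : Finset ε
  tail : ε → V
  head : ε → V
  s : V
  t : V

namespace Network

variable {V ε : Type} [DecidableEq ε]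

/-- `p` is a nonempty directed walk from `u` to `v` using edges of `N`. -/
def IsWalk (N : Network V ε) (u v : V) (p : List ε) : Prop :=
  p ≠ [] ∧ (∀ e ∈ p, e ∈ N.edges) ∧
  (∀ i, ∀ h : i + 1 < p.length,
    N.head (p.get ⟨i, Nat.lt_of_succ_lt h⟩) = N.tail (p.get ⟨i + 1, h⟩)) ∧
  (∀ h : 0 < p.length, N.tail (p.get ⟨0, h⟩) = u) ∧
  (∀ h : 0 < p.length, N.head (p.get ⟨p.length - 1, Nat.sub_lt h Nat.one_pos⟩) = v)

/-- An `s`-`t` path: an edge-simple walk from the source to the sink. -/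
def IsPath (N : Network V ε) (p : List ε) : Prop :=
  N.IsWalk N.s N.t p ∧ p.Nodup

/-- `v` is reachable from `u` by a directed walk (or `u = v`). -/
def Reach (N : Network V ε) (u v : V) : Prop :=
  u = v ∨ ∃ p, N.IsWalk u v p

/-- Reachability within the subgraph induced by the vertex set `S`. -/
def ReachIn (N : Network V ε) (S : Set V) (u v : V) : Prop :=
  u = v ∨ ∃ p, N.IsWalk u v p ∧ ∀ e ∈ p, N.tail e ∈ S ∧ N.head e ∈ S

/-- An edge-simple directed cycle. -/
def IsCycle (N : Network V ε) (p : List ε) : Prop :=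
  ∃ u, N.IsWalk u u p ∧ p.Nodup

def Acyclic (N : Network V ε) : Prop := ∀ p, ¬ N.IsCycle p

/-- A collection of pairwise edge-disjoint `s`-`t` paths (an integral flow in a
unit-capacity network). -/
def IsFlowList (N : Network V ε) (fs : List (List ε)) : Prop :=
  (∀ p ∈ fs, N.IsPath p) ∧ fs.Pairwise fun p q => ∀ e ∈ p, e ∉ q

def HasFlow (N : Network V ε) (n : ℕ) : Prop :=
  ∃ fs, N.IsFlowList fs ∧ fs.length = n

/-- The maximum-flow value `C_N(s,t)`: the maximum number of pairwise
edge-disjoint directed `s`-`t` paths. -/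
noncomputable def maxFlow (N : Network V ε) : ℕ :=
  sSup {n | N.HasFlow n}

/-- Delete the edges of `F` from the network. -/
def del (N : Network V ε) (F : Finset ε) : Network V ε :=
  { N with edges := N.edges \ F }

/-- `F` is a `k`-th order capacity factor of `N`:
`C_{N\F} ≤ C_N − k`, and `C_{N\F'} > C_N − k` for every proper `F' ⊊ F`. -/
def IsKCF (N : Network V ε) (k : ℕ) (F : Finset ε) : Prop :=
  F.Nonempty ∧ F ⊆ N.edges ∧ (N.del F).maxFlow + k ≤ N.maxFlow ∧
    ∀ F' ⊂ F, N.maxFlow < (N.del F').maxFlow + k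

/-- `F` is a capacity factor of `N`: deleting `F` decreases the maximum flow,
while deleting any proper subset does not. -/
def IsCF (N : Network V ε) (F : Finset ε) : Prop :=
  F.Nonempty ∧ F ⊆ N.edges ∧ (N.del F).maxFlow < N.maxFlow ∧
    ∀ F' ⊂ F, (N.del F').maxFlow = N.maxFlow

/-- The set of edges used by a flow given as a list of paths. -/
def usedEdges (fs : List (List ε)) : Finset ε := fs.flatten.toFinset

/-- Residual network w.r.t. a set of used (unit-capacity) edges: used edges
are reversed, unused edges keep their direction. -/
def residual (N : Network V ε) (used : Finset ε) : Network V ε :=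
  { edges := N.edges,
    tail := fun e => if e ∈ used then N.head e else N.tail e,
    head := fun e => if e ∈ used then N.tail e else N.head e,
    s := N.s, t := N.t }

/-- The same network with sink replaced by `v`. -/
def withSink (N : Network V ε) (v : V) : Network V ε := { N with t := v }

end Network

/-! The forward direction holds in any network: if `F` is a `k`-CF containing `e`, a maximum flow
of `N \ (F \ {e})` exceeds `C_N − k`, so it routes some path `p` through `e`, and its other paths
form a flow of `N \ p`.

Conversely, `p` together with `C_N − k` paths of `N \ p` is a flow `g` of value `C_N − k + 1` whose
support `U` contains `e`. Deleting every edge outside `U` keeps `g`, while deleting `e` as well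
brings the value down to `C_N − k`: in an acyclic network a flow of the same value supported
inside `U` must use all of `U`, because the edges it misses would be a nonempty set with equal in-
and out-degree at every vertex, and such a set contains a cycle. A minimal subset of
`(E \ U) ∪ {e}` whose deletion lowers the value by `k` is then a `k`-CF, and it contains `e`. -/

namespace Network

section

variable {V ε : Type} {N : Network V ε}

theorem isWalk_iff_isChain {u v : V} {p : List ε} :
    N.IsWalk u v p ↔ ∃ h : p ≠ [], (∀ e ∈ p, e ∈ N.edges) ∧
      p.IsChain (fun a b => N.head a = N.tail b) ∧
      N.tail (p.head h) = u ∧ N.head (p.getLast h) = v := by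
  rcases eq_or_ne p [] with rfl | hp
  · simp [IsWalk]
  · have hp0 := List.length_pos_iff.2 hp
    simp [IsWalk, hp, hp0, List.isChain_iff_getElem, List.head_eq_getElem,
      List.getLast_eq_getElem]

theorem isWalk_cons_iff {u v : V} {e : ε} {p : List ε} :
    N.IsWalk u v (e :: p) ↔ e ∈ N.edges ∧ N.tail e = u ∧
      (p = [] ∧ N.head e = v ∨ N.IsWalk (N.head e) v p) := by
  rcases p with _ | ⟨b, q⟩
  · simp [isWalk_iff_isChain]
  · simp [isWalk_iff_isChain, List.isChain_cons_cons, eq_comm (a := N.tail b)]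
    tauto

theorem not_isWalk_nil {u v : V} : ¬ N.IsWalk u v [] := fun h => h.1 rfl

theorem isWalk_singleton {e : ε} (he : e ∈ N.edges) : N.IsWalk (N.tail e) (N.head e) [e] :=
  isWalk_cons_iff.2 ⟨he, rfl, .inl ⟨rfl, rfl⟩⟩

theorem IsWalk.append {u v w : V} {p q : List ε} (hp : N.IsWalk u v p) (hq : N.IsWalk v w q) :
    N.IsWalk u w (p ++ q) := by
  induction p generalizing u with
  | nil => exact absurd hp not_isWalk_nil
  | cons e p ih =>
    obtain ⟨he, rfl, ⟨rfl, rfl⟩ | hp⟩ := isWalk_cons_iff.1 hp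
    · exact isWalk_cons_iff.2 ⟨he, rfl, .inr hq⟩
    · exact isWalk_cons_iff.2 ⟨he, rfl, .inr (ih hp)⟩

theorem IsWalk.exists_mem_head_eq {u v : V} {p : List ε} (h : N.IsWalk u v p) :
    ∃ e ∈ p, N.head e = v := by
  obtain ⟨hne, -, -, -, hv⟩ := isWalk_iff_isChain.1 h
  exact ⟨_, List.getLast_mem hne, hv⟩

theorem IsWalk.of_append_cons {u w : V} {p q : List ε} {b : ε}
    (h : N.IsWalk u w (p ++ b :: q)) (hp : p ≠ []) : N.IsWalk u (N.tail b) p := by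
  induction p generalizing u with
  | nil => exact absurd rfl hp
  | cons e p ih =>
    obtain ⟨he, rfl, ⟨hnil, -⟩ | h⟩ := isWalk_cons_iff.1 h
    · simp at hnil
    rcases eq_or_ne p [] with rfl | hp
    · obtain ⟨-, hb, -⟩ := isWalk_cons_iff.1 h
      exact hb ▸ isWalk_singleton he
    · exact isWalk_cons_iff.2 ⟨he, rfl, .inr (ih h hp)⟩

theorem IsWalk.exists_closed_of_not_nodup {u v : V} {p : List ε} (h : N.IsWalk u v p)
    (hp : ¬ p.Nodup) : ∃ x c, N.IsWalk x x c ∧ c.length < p.length := by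
  induction p generalizing u with
  | nil => exact absurd List.nodup_nil hp
  | cons e p ih =>
    rw [List.nodup_cons, not_and_or, not_not] at hp
    obtain ⟨-, rfl, ⟨rfl, -⟩ | h'⟩ := isWalk_cons_iff.1 h
    · simp at hp
    rcases hp with hep | hp
    · obtain ⟨l₁, l₂, rfl⟩ := List.append_of_mem hep
      exact ⟨N.tail e, e :: l₁, IsWalk.of_append_cons (p := e :: l₁) h (List.cons_ne_nil _ _),
        by simp⟩
    · obtain ⟨x, c, hc, hlt⟩ := ih h' hp
      exact ⟨x, c, hc, by simp; omega⟩

theorem Acyclic.not_isWalk_self (hA : N.Acyclic) {u : V} {p : List ε} : ¬ N.IsWalk u u p := by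
  intro h
  by_cases hp : p.Nodup
  · exact hA p ⟨u, h, hp⟩
  · obtain ⟨x, c, hc, hlt⟩ := h.exists_closed_of_not_nodup hp
    exact hA.not_isWalk_self hc
termination_by p.length

theorem IsWalk.nodup (hA : N.Acyclic) {u v : V} {p : List ε} (h : N.IsWalk u v p) : p.Nodup := by
  by_contra hp
  obtain ⟨x, c, hc, -⟩ := h.exists_closed_of_not_nodup hp
  exact hA.not_isWalk_self hc

theorem IsWalk.map_tail_add {u v : V} {p : List ε} (h : N.IsWalk u v p) :
    (p.map N.tail : Multiset V) + {v} = (p.map N.head : Multiset V) + {u} := by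
  induction p generalizing u with
  | nil => exact absurd h not_isWalk_nil
  | cons e p ih =>
    obtain ⟨-, rfl, ⟨rfl, rfl⟩ | h⟩ := isWalk_cons_iff.1 h
    · simp [add_comm]
    · simp only [List.map_cons, ← Multiset.cons_coe, Multiset.cons_add, ih h]
      simp only [← Multiset.singleton_add]
      abel

theorem Acyclic.eq_empty_of_map_tail_eq_map_head (hA : N.Acyclic) {D : Finset ε}
    (hD : D ⊆ N.edges) (hbal : D.val.map N.tail = D.val.map N.head) : D = ∅ := by
  rw [← Finset.not_nonempty_iff_eq_empty]
  rintro ⟨e₀, he₀⟩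
  -- every vertex entered by an edge of `D` is left by one, so walks inside `D` extend forever
  have hwalk : ∀ n, ∃ u v p, N.IsWalk u v p ∧ (∀ e ∈ p, e ∈ D) ∧ p.length = n + 1 := by
    intro n
    induction n with
    | zero => exact ⟨_, _, [e₀], isWalk_singleton (hD he₀), by simpa using he₀, rfl⟩
    | succ n ih =>
      obtain ⟨u, v, p, hp, hpD, hlen⟩ := ih
      obtain ⟨a, ha, rfl⟩ := hp.exists_mem_head_eq
      obtain ⟨b, hb, hab⟩ : ∃ b ∈ D, N.tail b = N.head a := by
        simpa [← hbal] using Multiset.mem_map_of_mem N.head (hpD a ha)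
      refine ⟨u, N.head b, p ++ [b], hp.append (hab ▸ isWalk_singleton (hD hb)), ?_,
        by simp [hlen]⟩
      simpa [or_imp, forall_and] using ⟨hpD, hb⟩
  obtain ⟨_, _, p, hp, hpD, hlen⟩ := hwalk D.card
  have hpD' : (p : Multiset ε) ≤ D.val :=
    (Multiset.le_iff_subset (Multiset.coe_nodup.2 (hp.nodup hA))).2 fun x hx => hpD x hx
  have := Multiset.card_le_card hpD'
  simp only [Multiset.coe_card, Finset.card_val] at this
  omega

theorem IsPath.mem_edges {p : List ε} (hp : N.IsPath p) {e : ε} (he : e ∈ p) : e ∈ N.edges :=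
  hp.1.2.1 e he

theorem IsFlowList.sublist {fs gs : List (List ε)} (h : N.IsFlowList fs) (hs : gs.Sublist fs) :
    N.IsFlowList gs :=
  ⟨fun p hp => h.1 p (hs.subset hp), h.2.sublist hs⟩

theorem IsFlowList.perm {fs gs : List (List ε)} (h : N.IsFlowList fs) (hs : fs.Perm gs) :
    N.IsFlowList gs :=
  ⟨fun p hp => h.1 p (hs.mem_iff.2 hp), h.2.perm hs fun hpq e heq hep => hpq e hep heq⟩

theorem HasFlow.mono {m n : ℕ} (h : N.HasFlow n) (hmn : m ≤ n) : N.HasFlow m := by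
  obtain ⟨fs, hfs, rfl⟩ := h
  exact ⟨fs.take m, hfs.sublist (List.take_sublist m fs), by simp [hmn]⟩

end

section

variable {V ε : Type} [DecidableEq ε] {N : Network V ε}

theorem mem_usedEdges {fs : List (List ε)} {e : ε} : e ∈ usedEdges fs ↔ ∃ p ∈ fs, e ∈ p := by
  simp [usedEdges]

theorem isFlowList_cons_iff {p : List ε} {fs : List (List ε)} :
    N.IsFlowList (p :: fs) ↔ N.IsPath p ∧ N.IsFlowList fs ∧ Disjoint p.toFinset (usedEdges fs) := by
  simp only [IsFlowList, List.mem_cons, forall_eq_or_imp, List.pairwise_cons,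
    Finset.disjoint_left, List.mem_toFinset, mem_usedEdges]
  grind

theorem IsFlowList.usedEdges_subset {fs : List (List ε)} (h : N.IsFlowList fs) :
    usedEdges fs ⊆ N.edges := fun e he => by
  obtain ⟨p, hp, hep⟩ := mem_usedEdges.1 he
  exact (h.1 p hp).mem_edges hep

theorem IsFlowList.val_usedEdges {fs : List (List ε)} (h : N.IsFlowList fs) :
    (usedEdges fs).val = fs.flatten :=
  Multiset.dedup_eq_self.2 <| Multiset.coe_nodup.2 <|
    List.nodup_flatten.2 ⟨fun p hp => (h.1 p hp).2, h.2.imp id⟩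

theorem IsFlowList.length_le_card {fs : List (List ε)} (h : N.IsFlowList fs) :
    fs.length ≤ N.edges.card :=
  calc fs.length = (fs.map List.length).length := (List.length_map _).symm
    _ ≤ (fs.map List.length).sum := List.length_le_sum_of_one_le _ <| by
      simpa [Nat.one_le_iff_ne_zero] using fun p hp => (h.1 p hp).1.1
    _ = (usedEdges fs).card := by
      rw [← List.length_flatten, ← Finset.card_val, h.val_usedEdges, Multiset.coe_card]
    _ ≤ N.edges.card := Finset.card_le_card h.usedEdges_subset

theorem IsFlowList.map_tail_add {fs : List (List ε)} (h : N.IsFlowList fs) :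
    (usedEdges fs).val.map N.tail + fs.length • {N.t} =
      (usedEdges fs).val.map N.head + fs.length • {N.s} := by
  rw [h.val_usedEdges]
  induction fs with
  | nil => simp
  | cons p fs ih =>
    obtain ⟨hp, hfs, -⟩ := isFlowList_cons_iff.1 h
    have hbal := hp.1.map_tail_add
    rw [← Multiset.map_coe, ← Multiset.map_coe] at hbal
    simp only [List.flatten_cons, ← Multiset.coe_add, Multiset.map_add, List.length_cons,
      succ_nsmul]
    calc _ = ((p : Multiset ε).map N.tail + {N.t}) +
          ((fs.flatten : Multiset ε).map N.tail + fs.length • {N.t}) := by abel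
      _ = _ := by rw [hbal, ih hfs]; abel

theorem bddAbove_hasFlow : BddAbove {n | N.HasFlow n} :=
  ⟨N.edges.card, by rintro n ⟨fs, hfs, rfl⟩; exact hfs.length_le_card⟩

theorem hasFlow_maxFlow : N.HasFlow N.maxFlow :=
  Nat.sSup_mem ⟨0, show N.HasFlow 0 from ⟨[], ⟨by simp, by simp⟩, rfl⟩⟩ bddAbove_hasFlow

theorem IsFlowList.length_le_maxFlow {fs : List (List ε)} (h : N.IsFlowList fs) :
    fs.length ≤ N.maxFlow :=
  le_csSup bddAbove_hasFlow ⟨fs, h, rfl⟩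

theorem isFlowList_del_iff {F : Finset ε} {fs : List (List ε)} :
    (N.del F).IsFlowList fs ↔ N.IsFlowList fs ∧ Disjoint (usedEdges fs) F := by
  simp only [IsFlowList, IsPath, IsWalk, del, Finset.mem_sdiff, Finset.disjoint_left,
    mem_usedEdges]
  grind

theorem maxFlow_del_anti {F F' : Finset ε} (h : F' ⊆ F) :
    (N.del F).maxFlow ≤ (N.del F').maxFlow := by
  obtain ⟨fs, hfs, hlen⟩ := hasFlow_maxFlow (N := N.del F)
  obtain ⟨hfsN, hdisj⟩ := isFlowList_del_iff.1 hfs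
  exact hlen ▸ (isFlowList_del_iff.2 ⟨hfsN, hdisj.mono_right h⟩).length_le_maxFlow

theorem IsFlowList.erase {fs : List (List ε)} {q : List ε} (h : N.IsFlowList fs) (hq : q ∈ fs) :
    (N.del q.toFinset).IsFlowList (fs.erase q) := by
  obtain ⟨-, hfs, hdisj⟩ := isFlowList_cons_iff.1 (h.perm (List.perm_cons_erase hq))
  exact isFlowList_del_iff.2 ⟨hfs, hdisj.symm⟩

theorem IsFlowList.length_le_maxFlow_del_compl {g : List (List ε)} (hg : N.IsFlowList g) :
    g.length ≤ (N.del (N.edges \ usedEdges g)).maxFlow :=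
  (isFlowList_del_iff.2 ⟨hg, Finset.disjoint_sdiff⟩).length_le_maxFlow

theorem exists_path_of_maxFlow_del_lt {F : Finset ε} {e : ε}
    (hlt : (N.del F).maxFlow < (N.del (F.erase e)).maxFlow) :
    ∃ q, N.IsPath q ∧ e ∈ q ∧ (N.del (F.erase e)).maxFlow ≤ (N.del q.toFinset).maxFlow + 1 := by
  obtain ⟨fs, hfs, hlen⟩ := hasFlow_maxFlow (N := N.del (F.erase e))
  obtain ⟨hfsN, hdisj⟩ := isFlowList_del_iff.1 hfs
  obtain ⟨q, hq, heq⟩ : ∃ q ∈ fs, e ∈ q := by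
    rw [← mem_usedEdges]
    by_contra he
    have hF := isFlowList_del_iff.2 ⟨hfsN, Finset.disjoint_of_erase_right he hdisj⟩
    have := hF.length_le_maxFlow
    omega
  have := (hfsN.erase hq).length_le_maxFlow
  rw [List.length_erase_of_mem hq] at this
  exact ⟨q, hfsN.1 q hq, heq, by omega⟩

theorem IsKCF.exists_path {k : ℕ} {F : Finset ε} {e : ε} (hF : N.IsKCF k F) (he : e ∈ F) :
    ∃ p, N.IsPath p ∧ e ∈ p ∧ N.maxFlow ≤ (N.del p.toFinset).maxFlow + k := by
  obtain ⟨-, -, hdel, hmin⟩ := hF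
  have herase := hmin _ (Finset.erase_ssubset he)
  obtain ⟨q, hq, heq, hle⟩ :=
    exists_path_of_maxFlow_del_lt (lt_of_add_lt_add_right (hdel.trans_lt herase))
  exact ⟨q, hq, heq, by omega⟩

theorem exists_isKCF_mem_of_del_erase {k : ℕ} {F₀ : Finset ε} {e : ε} (hF₀ : F₀ ⊆ N.edges)
    (hdel : (N.del F₀).maxFlow + k ≤ N.maxFlow)
    (herase : N.maxFlow < (N.del (F₀.erase e)).maxFlow + k) :
    ∃ F, N.IsKCF k F ∧ e ∈ F := by
  obtain ⟨F, hFF₀, hmin⟩ :=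
    exists_minimal_le_of_wellFoundedLT (fun F => (N.del F).maxFlow + k ≤ N.maxFlow) F₀ hdel
  have heF : e ∈ F := by
    by_contra heF
    have := maxFlow_del_anti (N := N) (Finset.subset_erase.2 ⟨hFF₀, heF⟩)
    have := hmin.prop
    omega
  exact ⟨F, ⟨⟨e, heF⟩, hFF₀.trans hF₀, hmin.prop,
    fun F' hF' => not_le.1 (hmin.not_prop_of_lt hF')⟩, heF⟩

theorem Acyclic.usedEdges_eq_of_subset (hA : N.Acyclic) {g h : List (List ε)}
    (hg : N.IsFlowList g) (hh : N.IsFlowList h) (hlen : h.length = g.length)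
    (hsub : usedEdges h ⊆ usedEdges g) : usedEdges h = usedEdges g := by
  set D := usedEdges g \ usedEdges h
  have hgD : (usedEdges g).val = D.val + (usedEdges h).val := by
    rw [Finset.sdiff_val, tsub_add_cancel_of_le (Finset.val_le_iff.2 hsub)]
  have hbal : D.val.map N.tail = D.val.map N.head := by
    have hbg := hg.map_tail_add
    rw [hgD, ← hlen, Multiset.map_add, Multiset.map_add, add_assoc, add_assoc,
      hh.map_tail_add] at hbg
    exact add_right_cancel hbg
  have hD := hA.eq_empty_of_map_tail_eq_map_head (Finset.sdiff_subset.trans hg.usedEdges_subset)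
    hbal
  exact hsub.antisymm (Finset.sdiff_eq_empty_iff_subset.1 hD)

theorem Acyclic.maxFlow_del_insert_compl_lt (hA : N.Acyclic) {g : List (List ε)} {e : ε}
    (hg : N.IsFlowList g) (he : e ∈ usedEdges g) :
    (N.del (insert e (N.edges \ usedEdges g))).maxFlow < g.length := by
  by_contra! hle
  obtain ⟨h, hh, hlen⟩ := hasFlow_maxFlow.mono hle
  obtain ⟨hhN, hdisj⟩ := isFlowList_del_iff.1 hh
  have hsub : usedEdges h ⊆ (usedEdges g).erase e := fun x hx => by
    have hxF := Finset.disjoint_left.1 hdisj hx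
    simp only [Finset.mem_insert, Finset.mem_sdiff, not_or, not_and, not_not] at hxF
    exact Finset.mem_erase.2 ⟨hxF.1, hxF.2 (hhN.usedEdges_subset hx)⟩
  have hUh := hA.usedEdges_eq_of_subset hg hhN hlen (hsub.trans (Finset.erase_subset _ _))
  exact Finset.notMem_erase e _ (hsub (hUh ▸ he))

theorem Acyclic.exists_isKCF_of_path (hA : N.Acyclic) {k : ℕ} (hk : k ≤ N.maxFlow)
    {p : List ε} {e : ε} (hp : N.IsPath p) (hep : e ∈ p)
    (hle : N.maxFlow ≤ (N.del p.toFinset).maxFlow + k) :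
    ∃ F, N.IsKCF k F ∧ e ∈ F := by
  obtain ⟨qs, hqs, hqlen⟩ := (hasFlow_maxFlow (N := N.del p.toFinset)).mono
    (m := N.maxFlow - k) (by omega)
  obtain ⟨hqsN, hdisj⟩ := isFlowList_del_iff.1 hqs
  have hg : N.IsFlowList (p :: qs) := isFlowList_cons_iff.2 ⟨hp, hqsN, hdisj.symm⟩
  have he : e ∈ usedEdges (p :: qs) := mem_usedEdges.2 ⟨p, List.mem_cons_self, hep⟩
  have hlt := hA.maxFlow_del_insert_compl_lt hg he
  have hge := hg.length_le_maxFlow_del_compl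
  rw [← Finset.erase_insert (s := N.edges \ usedEdges (p :: qs))
    fun h => (Finset.mem_sdiff.1 h).2 he] at hge
  simp only [List.length_cons, hqlen] at hlt hge
  exact exists_isKCF_mem_of_del_erase (F₀ := insert e (N.edges \ usedEdges (p :: qs)))
    (Finset.insert_subset (hp.mem_edges hep) Finset.sdiff_subset) (by omega) (by omega)

end

end Network

open Network

theorem mem_kCF_iff_path_general {V ε : Type} [DecidableEq ε]
    (N : Network V ε) (hA : N.Acyclic) (e : ε)
    (k : ℕ) (hk2 : k ≤ N.maxFlow) :
    (∃ F, N.IsKCF k F ∧ e ∈ F) ↔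
      ∃ p, N.IsPath p ∧ e ∈ p ∧ N.maxFlow ≤ (N.del p.toFinset).maxFlow + k :=
  ⟨fun ⟨_, hF, heF⟩ => hF.exists_path heF,
    fun ⟨_, hp, hep, hle⟩ => hA.exists_isKCF_of_path hk2 hp hep hle⟩

/-- In an acyclic network, `e` lies in some `k`-CF iff some `s`-`t` path `p`
through `e` satisfies `C_{N\p}(s,t) ≥ C_N(s,t) − k`. -/
theorem mem_kCF_iff_path {V ε : Type} [DecidableEq ε]
    (N : Network V ε) (hA : N.Acyclic) (e : ε) (he : e ∈ N.edges)
    (k : ℕ) (hk1 : 1 ≤ k) (hk2 : k ≤ N.maxFlow) :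
    (∃ F, N.IsKCF k F ∧ e ∈ F) ↔
      ∃ p, N.IsPath p ∧ e ∈ p ∧ N.maxFlow ≤ (N.del p.toFinset).maxFlow + k :=
  mem_kCF_iff_path_general N hA e k hk2
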